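/- Let (X,≤) be a partially ordered set and suppose d is a metric on X such that (X,d) is a complete metric space. Let F : X × X → X be a continuous mapping having the strict mixed monotone property on X, and assume F satisfies Samet's generalized Meir–Keeler condition: for each ε > 0 there exists δ(ε) > 0 such that for all x,y,u,v ∈ X with x ≥ u and y ≤ v, ε ≤ (1/2)[d(x,u)+d(y,v)] < ε+δ(ε) implies d(F(x,y),F(u,v)) < ε. If there exist x₀, y₀ ∈ X such that x₀ < F(x₀,y₀) and y₀ ≥ F(y₀,x₀), then there exist x, y ∈ X such that x = F(x,y) and y = F(y,x). -/
import Mathlib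


/-- F has the strict mixed monotone property. -/
def StrictMixedMonotone {X : Type*} [PartialOrder X] (F : X → X → X) : Prop :=
  (∀ y : X, StrictMono (fun x => F x y)) ∧ (∀ x : X, StrictAnti (fun y => F x y))

/-- F satisfies Samet's generalized Meir–Keeler condition. -/
def SametMeirKeeler {X : Type*} [PartialOrder X] [MetricSpace X] (F : X → X → X) : Prop :=
  ∀ ε > (0 : ℝ), ∃ δ > (0 : ℝ), ∀ x y u v : X, u ≤ x → y ≤ v →
    ε ≤ (dist x u + dist y v) / 2 → (dist x u + dist y v) / 2 < ε + δ →
    dist (F x y) (F u v) < ε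

theorem samet_coupled_fixed_point
    {X : Type*} [PartialOrder X] [MetricSpace X] [CompleteSpace X]
    (F : X → X → X)
    (hcont : Continuous (fun p : X × X => F p.1 p.2))
    (hmm : StrictMixedMonotone F)
    (hMK : SametMeirKeeler F)
    (x₀ y₀ : X)
    (hinit : x₀ < F x₀ y₀ ∧ F y₀ x₀ ≤ y₀) :
    ∃ x y : X, F x y = x ∧ F y x = y := by
  obtain ⟨hx0, hy0⟩ := hinit
  set G : X × X → X × X := fun q => (F q.1 q.2, F q.2 q.1) with hG
  set x : ℕ → X := fun n => (G^[n] (x₀, y₀)).1 with hxdef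
  set y : ℕ → X := fun n => (G^[n] (x₀, y₀)).2 with hydef
  have hxs : ∀ n, x (n + 1) = F (x n) (y n) := by
    intro n
    show (G^[n+1] (x₀, y₀)).1 = _
    rw [Function.iterate_succ_apply']
  have hys : ∀ n, y (n + 1) = F (y n) (x n) := by
    intro n
    show (G^[n+1] (x₀, y₀)).2 = _
    rw [Function.iterate_succ_apply']
  have hx00 : x 0 = x₀ := rfl
  have hy00 : y 0 = y₀ := rfl
  -- monotonicity of the sequences
  have hmono : ∀ n, x n < x (n + 1) ∧ y (n + 1) ≤ y n := by
    intro n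
    induction n with
    | zero =>
      constructor
      · rw [hx00, hxs, hx00, hy00]; exact hx0
      · rw [hy00, hys, hx00, hy00]; exact hy0
    | succ n ih =>
      constructor
      · calc x (n+1) = F (x n) (y n) := hxs n
          _ ≤ F (x n) (y (n+1)) := ((hmm.2 (x n)).antitone ih.2 : _)
          _ < F (x (n+1)) (y (n+1)) := hmm.1 (y (n+1)) ih.1
          _ = x (n+2) := (hxs (n+1)).symm
      · calc y (n+2) = F (y (n+1)) (x (n+1)) := hys (n+1)
          _ ≤ F (y n) (x (n+1)) := (hmm.1 (x (n+1))).monotone ih.2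
          _ ≤ F (y n) (x n) := (hmm.2 (y n) ih.1).le
          _ = y (n+1) := (hys n).symm
  have hx_mono : StrictMono x := strictMono_nat_of_lt_succ fun n => (hmono n).1
  have hy_anti : Antitone y := antitone_nat_of_succ_le fun n => (hmono n).2
  -- contraction helper
  have contract : ∀ a b c e : X, b ≤ a → c ≤ e → 0 < dist a b + dist c e →
      dist (F a c) (F b e) < (dist a b + dist c e) / 2 := by
    intro a b c e h1 h2 hpos
    obtain ⟨δ, hδ, h⟩ := hMK ((dist a b + dist c e) / 2) (by linarith)
    exact h a c b e h1 h2 le_rfl (by linarith)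
  -- key componentwise contraction for n < m
  have key : ∀ n m : ℕ, n < m →
      dist (F (x m) (y m)) (F (x n) (y n)) < (dist (x m) (x n) + dist (y m) (y n)) / 2 ∧
      dist (F (y m) (x m)) (F (y n) (x n)) < (dist (x m) (x n) + dist (y m) (y n)) / 2 := by
    intro n m hnm
    have hxle : x n ≤ x m := (hx_mono hnm).le
    have hyle : y m ≤ y n := hy_anti hnm.le
    have hdx : 0 < dist (x m) (x n) := dist_pos.2 (hx_mono hnm).ne'
    have hdy : 0 ≤ dist (y m) (y n) := dist_nonneg
    have hpos : 0 < dist (x m) (x n) + dist (y m) (y n) := by linarith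
    constructor
    · exact contract (x m) (x n) (y m) (y n) hxle hyle hpos
    · have h2 := contract (y n) (y m) (x n) (x m) hyle hxle
        (by rw [dist_comm (y n) (y m), dist_comm (x n) (x m)]; linarith)
      rw [dist_comm (y n) (y m), dist_comm (x n) (x m)] at h2
      rw [dist_comm (F (y m) (x m)) (F (y n) (x n))]
      linarith
  -- the sequence of step distances
  set D : ℕ → ℝ := fun n => (dist (x (n + 1)) (x n) + dist (y (n + 1)) (y n)) / 2 with hD
  have hDpos : ∀ n, 0 < D n := by
    intro n
    have hdx : 0 < dist (x (n+1)) (x n) := dist_pos.2 (hmono n).1.ne'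
    have hdy : 0 ≤ dist (y (n+1)) (y n) := dist_nonneg
    simp only [hD]; linarith
  have hDlt : ∀ n, D (n + 1) < D n := by
    intro n
    have hk := key n (n + 1) (Nat.lt_succ_self n)
    rw [← hxs (n+1), ← hxs n, ← hys (n+1), ← hys n] at hk
    simp only [hD]
    linarith [hk.1, hk.2]
  have hD_anti : Antitone D := antitone_nat_of_succ_le fun n => (hDlt n).le
  have hbdd : BddBelow (Set.range D) := ⟨0, by rintro _ ⟨n, rfl⟩; exact (hDpos n).le⟩
  -- D tends to 0
  have hD0 : ∀ ε > (0 : ℝ), ∃ N, D N < ε := by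
    intro ε hε
    set r := ⨅ n, D n with hr
    have hrle : ∀ n, r ≤ D n := fun n => ciInf_le hbdd n
    have hr0 : 0 ≤ r := le_ciInf fun n => (hDpos n).le
    rcases eq_or_lt_of_le hr0 with h0 | hrpos
    · have : r < ε := by rw [← h0]; exact hε
      exact exists_lt_of_ciInf_lt this
    · exfalso
      obtain ⟨δ, hδ, hMKr⟩ := hMK r hrpos
      obtain ⟨N, hN⟩ : ∃ N, D N < r + δ := exists_lt_of_ciInf_lt (by linarith)
      have havg : r ≤ (dist (x (N+1)) (x N) + dist (y (N+1)) (y N)) / 2 := hrle N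
      have havg' : (dist (x (N+1)) (x N) + dist (y (N+1)) (y N)) / 2 < r + δ := hN
      have h1 := hMKr (x (N+1)) (y (N+1)) (x N) (y N) (hmono N).1.le (hmono N).2 havg havg'
      have hcomm : dist (y N) (y (N+1)) + dist (x N) (x (N+1))
          = dist (x (N+1)) (x N) + dist (y (N+1)) (y N) := by
        rw [dist_comm (y N), dist_comm (x N)]; ring
      have h2 := hMKr (y N) (x N) (y (N+1)) (x (N+1)) (hmono N).2 (hmono N).1.le
        (by rw [hcomm]; exact havg) (by rw [hcomm]; exact havg')
      rw [← hxs (N+1), ← hxs N] at h1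
      rw [← hys (N+1), ← hys N] at h2
      have hrN1 := hrle (N + 1)
      simp only [hD] at hrN1
      have hcomm2 : dist (y (N+1)) (y (N+2)) = dist (y (N+2)) (y (N+1)) := dist_comm _ _
      linarith [hrN1, h1, h2]
  -- Cauchy claim
  have hclaim : ∀ ε > (0 : ℝ), ∃ N, ∀ m ≥ N,
      (dist (x m) (x N) + dist (y m) (y N)) / 2 < ε := by
    intro ε hε
    obtain ⟨δ, hδ, hMKε⟩ := hMK ε hε
    obtain ⟨N₀, hN₀⟩ := hD0 (δ / 2) (by linarith)
    refine ⟨N₀ + 1, ?_⟩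
    intro m hm
    induction m, hm using Nat.le_induction with
    | base => simpa using hε
    | succ m hm ih =>
      have hN₀m : N₀ < m := Nat.lt_of_succ_le hm
      have hdx : 0 < dist (x m) (x N₀) := dist_pos.2 (hx_mono hN₀m).ne'
      have hdy : 0 ≤ dist (y m) (y N₀) := dist_nonneg
      have htx : dist (x m) (x N₀) ≤ dist (x m) (x (N₀+1)) + dist (x (N₀+1)) (x N₀) :=
        dist_triangle _ _ _
      have hty : dist (y m) (y N₀) ≤ dist (y m) (y (N₀+1)) + dist (y (N₀+1)) (y N₀) :=
        dist_triangle _ _ _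
      have hDN₀ : (dist (x (N₀+1)) (x N₀) + dist (y (N₀+1)) (y N₀)) / 2 < δ / 2 := hN₀
      have hs_lt : (dist (x m) (x N₀) + dist (y m) (y N₀)) / 2 < ε + δ / 2 := by linarith
      by_cases hcase : ε ≤ (dist (x m) (x N₀) + dist (y m) (y N₀)) / 2
      · have h1 := hMKε (x m) (y m) (x N₀) (y N₀) (hx_mono hN₀m).le (hy_anti hN₀m.le)
          hcase (by linarith)
        have hcomm : dist (y N₀) (y m) + dist (x N₀) (x m)
            = dist (x m) (x N₀) + dist (y m) (y N₀) := by
          rw [dist_comm (y N₀), dist_comm (x N₀)]; ring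
        have h2 := hMKε (y N₀) (x N₀) (y m) (x m) (hy_anti hN₀m.le) (hx_mono hN₀m).le
          (by rw [hcomm]; exact hcase) (by rw [hcomm]; linarith)
        rw [hxs m, hys m, hxs N₀, hys N₀]
        rw [dist_comm (F (y m) (x m)) (F (y N₀) (x N₀))] at *
        linarith [h1, h2]
      · push_neg at hcase
        have hk := key N₀ m hN₀m
        rw [hxs m, hys m, hxs N₀, hys N₀]
        linarith [hk.1, hk.2]
  -- Cauchy sequences
  have hcx : CauchySeq x := by
    rw [Metric.cauchySeq_iff']
    intro ε hε
    obtain ⟨N, hN⟩ := hclaim (ε / 2) (by linarith)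
    refine ⟨N, fun m hm => ?_⟩
    have := hN m hm
    have := dist_nonneg (x := y m) (y := y N)
    linarith
  have hcy : CauchySeq y := by
    rw [Metric.cauchySeq_iff']
    intro ε hε
    obtain ⟨N, hN⟩ := hclaim (ε / 2) (by linarith)
    refine ⟨N, fun m hm => ?_⟩
    have := hN m hm
    have := dist_nonneg (x := x m) (y := x N)
    linarith
  obtain ⟨a, ha⟩ := cauchySeq_tendsto_of_complete hcx
  obtain ⟨b, hb⟩ := cauchySeq_tendsto_of_complete hcy
  refine ⟨a, b, ?_, ?_⟩
  · have hpt : Filter.Tendsto (fun n => ((x n : X), y n)) Filter.atTop (nhds (a, b)) :=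
      ha.prodMk_nhds hb
    have h1 : Filter.Tendsto (fun n => F (x n) (y n)) Filter.atTop (nhds (F a b)) :=
      (hcont.tendsto (a, b)).comp hpt
    have h2 : Filter.Tendsto (fun n => x (n + 1)) Filter.atTop (nhds a) :=
      ha.comp (Filter.tendsto_add_atTop_nat 1)
    exact tendsto_nhds_unique h1 (h2.congr hxs)
  · have hpt : Filter.Tendsto (fun n => ((y n : X), x n)) Filter.atTop (nhds (b, a)) :=
      hb.prodMk_nhds ha
    have h1 : Filter.Tendsto (fun n => F (y n) (x n)) Filter.atTop (nhds (F b a)) :=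
      (hcont.tendsto (b, a)).comp hpt
    have h2 : Filter.Tendsto (fun n => y (n + 1)) Filter.atTop (nhds b) :=
      hb.comp (Filter.tendsto_add_atTop_nat 1)
    exact tendsto_nhds_unique h1 (h2.congr hys)
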